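/- arXiv:math/0504095 — 3 statements merged into one kernel-verified Lean document; each statement's English description precedes it below -/
import Mathlib

section
/- Let W₁ be the Lie algebra of formal vector fields on ℝ, identified with the space of formal power series ℝ[[x]] equipped with the bracket [p, q] = p·q′ − p′·q (corresponding to [p∂ₓ, q∂ₓ] = (pq′ − p′q)∂ₓ). Define the trilinear form gv on W₁ by gv(p₁, p₂, p₃) = det of the 3×3 matrix whose i-th row is (pᵢ(0), pᵢ′(0), pᵢ″(0)). Then gv is an alternating trilinear form satisfying the Lie algebra 3-cocycle identity: for all g₁, g₂, g₃, g₄ ∈ W₁, Σ_{1 ≤ i < j ≤ 4} (−1)^{i+j} gv([gᵢ, gⱼ], g₁, …, ĝᵢ, …, ĝⱼ, …, g₄) = 0 (hats denote omitted arguments). In particular, gv is the Gelfand–Fuchs cocycle representing the generator of H³(W₁, ℝ). -/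
/-- The formal derivative of a formal power series: `(Σ aₙxⁿ)′ = Σ (n+1)a_{n+1}xⁿ`. -/
noncomputable def formalDeriv (p : PowerSeries ℝ) : PowerSeries ℝ :=
  PowerSeries.mk fun n => ((n : ℝ) + 1) * PowerSeries.coeff (n + 1) p

/-- The bracket `[p, q] = p·q′ − p′·q` on `W₁ = ℝ[[x]]`, corresponding to
`[p∂ₓ, q∂ₓ] = (pq′ − p′q)∂ₓ` on formal vector fields on `ℝ`. -/
noncomputable def W1Bracket (p q : PowerSeries ℝ) : PowerSeries ℝ :=
  p * formalDeriv q - formalDeriv p * q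

/-- The value at `0` of a formal power series, i.e. its constant coefficient. -/
noncomputable def ev0 (p : PowerSeries ℝ) : ℝ := PowerSeries.coeff 0 p

/-- The Gelfand–Fuchs cochain `gv` on `W₁`:
`gv(p₁, p₂, p₃) = det` of the `3×3` matrix whose `i`-th row is
`(pᵢ(0), pᵢ′(0), pᵢ″(0))`. -/
noncomputable def gvCochain (p₁ p₂ p₃ : PowerSeries ℝ) : ℝ :=
  Matrix.det
    !![ev0 p₁, ev0 (formalDeriv p₁), ev0 (formalDeriv (formalDeriv p₁));
       ev0 p₂, ev0 (formalDeriv p₂), ev0 (formalDeriv (formalDeriv p₂));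
       ev0 p₃, ev0 (formalDeriv p₃), ev0 (formalDeriv (formalDeriv p₃))]

/-!
`gv` is the determinant pulled back along the 2-jet map `p ↦ (p(0), p′(0), p″(0))`, which makes
it an alternating trilinear form. The 2-jet of `[p, q]` involves only the 3-jets of `p` and `q`, so
the cocycle identity is a polynomial identity in the coefficients of order `≤ 3` of `g₁, …, g₄`.
-/

open PowerSeries

theorem coeff_formalDeriv (p : PowerSeries ℝ) (n : ℕ) :
    coeff n (formalDeriv p) = (n + 1) * coeff (n + 1) p := by
  rw [formalDeriv, coeff_mk]

theorem formalDeriv_eq_derivative (p : PowerSeries ℝ) : formalDeriv p = d⁄dX ℝ p := by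
  ext n
  rw [coeff_formalDeriv, coeff_derivative, mul_comm]

noncomputable def twoJet : PowerSeries ℝ →ₗ[ℝ] Fin 3 → ℝ :=
  let D : PowerSeries ℝ →ₗ[ℝ] PowerSeries ℝ := d⁄dX ℝ
  LinearMap.pi ![coeff 0, coeff 0 ∘ₗ D, coeff 0 ∘ₗ D ∘ₗ D]

noncomputable def gvForm : PowerSeries ℝ [⋀^Fin 3]→ₗ[ℝ] ℝ :=
  Matrix.detRowAlternating.compLinearMap twoJet

section

variable {α : Type*} (a b c x : α)

theorem update_vec3_zero : Function.update ![a, b, c] 0 x = ![x, b, c] := by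
  ext i; fin_cases i <;> rfl

theorem update_vec3_one : Function.update ![a, b, c] 1 x = ![a, x, c] := by
  ext i; fin_cases i <;> rfl

theorem update_vec3_two : Function.update ![a, b, c] 2 x = ![a, b, x] := by
  ext i; fin_cases i <;> rfl

end

theorem gvCochain_eq_gvForm (p q r : PowerSeries ℝ) : gvCochain p q r = gvForm ![p, q, r] := by
  simp only [gvCochain, ev0, formalDeriv_eq_derivative]
  rfl

theorem gvCochain_eq_two_mul_det (p q r : PowerSeries ℝ) :
    gvCochain p q r = 2 * Matrix.det !![coeff 0 p, coeff 1 p, coeff 2 p;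
      coeff 0 q, coeff 1 q, coeff 2 q; coeff 0 r, coeff 1 r, coeff 2 r] := by
  simp only [gvCochain, ev0, coeff_formalDeriv, Matrix.det_fin_three, Matrix.of_apply,
    Matrix.cons_val_zero, Matrix.cons_val_one, Matrix.cons_val_two, Matrix.head_cons,
    Matrix.tail_cons]
  push_cast
  ring

theorem coeff_W1Bracket (p q : PowerSeries ℝ) (n : ℕ) :
    coeff n (W1Bracket p q) = ∑ i ∈ Finset.range (n + 1),
      (coeff i p * ((n - i + 1 : ℕ) * coeff (n - i + 1) q)
        - (i + 1) * coeff (i + 1) p * coeff (n - i) q) := by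
  simp only [W1Bracket, map_sub, coeff_mul, Finset.Nat.sum_antidiagonal_eq_sum_range_succ_mk,
    coeff_formalDeriv, ← Finset.sum_sub_distrib]
  push_cast
  rfl

theorem coeff_zero_W1Bracket (p q : PowerSeries ℝ) :
    coeff 0 (W1Bracket p q) = coeff 0 p * coeff 1 q - coeff 1 p * coeff 0 q := by
  simp [coeff_W1Bracket]

theorem coeff_one_W1Bracket (p q : PowerSeries ℝ) :
    coeff 1 (W1Bracket p q) = 2 * (coeff 0 p * coeff 2 q - coeff 2 p * coeff 0 q) := by
  simp only [coeff_W1Bracket, Finset.sum_range_succ, Finset.sum_range_zero]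
  push_cast
  ring

theorem coeff_two_W1Bracket (p q : PowerSeries ℝ) :
    coeff 2 (W1Bracket p q) = 3 * (coeff 0 p * coeff 3 q - coeff 3 p * coeff 0 q)
      + (coeff 1 p * coeff 2 q - coeff 2 p * coeff 1 q) := by
  simp only [coeff_W1Bracket, Finset.sum_range_succ, Finset.sum_range_zero]
  push_cast
  ring

theorem gvCochain_cocycle (g₁ g₂ g₃ g₄ : PowerSeries ℝ) :
    - gvCochain (W1Bracket g₁ g₂) g₃ g₄
      + gvCochain (W1Bracket g₁ g₃) g₂ g₄
      - gvCochain (W1Bracket g₁ g₄) g₂ g₃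
      - gvCochain (W1Bracket g₂ g₃) g₁ g₄
      + gvCochain (W1Bracket g₂ g₄) g₁ g₃
      - gvCochain (W1Bracket g₃ g₄) g₁ g₂ = 0 := by
  simp only [gvCochain_eq_two_mul_det, Matrix.det_fin_three, coeff_zero_W1Bracket,
    coeff_one_W1Bracket, coeff_two_W1Bracket, Matrix.of_apply, Matrix.cons_val_zero,
    Matrix.cons_val_one, Matrix.cons_val_two, Matrix.head_cons, Matrix.tail_cons]
  ring

/-- On the Lie algebra `W₁` of formal vector fields on `ℝ`
(identified with `ℝ[[x]]` with the bracket `[p,q] = pq′ − p′q`), the trilinear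
form `gv(p₁,p₂,p₃) = det (pᵢ(0), pᵢ′(0), pᵢ″(0))_{i=1,2,3}` is an alternating
trilinear form satisfying the Lie algebra 3-cocycle identity
`Σ_{1 ≤ i < j ≤ 4} (−1)^{i+j} gv([gᵢ, gⱼ], g₁, …, ĝᵢ, …, ĝⱼ, …, g₄) = 0`
(the Gelfand–Fuchs cocycle representing the generator of `H³(W₁, ℝ)`). -/
theorem gv_is_gelfandFuchs_cocycle :
    -- trilinearity
    (∀ p p' q r : PowerSeries ℝ, gvCochain (p + p') q r
        = gvCochain p q r + gvCochain p' q r) ∧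
    (∀ p q q' r : PowerSeries ℝ, gvCochain p (q + q') r
        = gvCochain p q r + gvCochain p q' r) ∧
    (∀ p q r r' : PowerSeries ℝ, gvCochain p q (r + r')
        = gvCochain p q r + gvCochain p q r') ∧
    (∀ (c : ℝ) (p q r : PowerSeries ℝ), gvCochain (c • p) q r = c * gvCochain p q r) ∧
    (∀ (c : ℝ) (p q r : PowerSeries ℝ), gvCochain p (c • q) r = c * gvCochain p q r) ∧
    (∀ (c : ℝ) (p q r : PowerSeries ℝ), gvCochain p q (c • r) = c * gvCochain p q r) ∧
    -- alternation: vanishing whenever two arguments coincide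
    (∀ p q : PowerSeries ℝ, gvCochain p p q = 0) ∧
    (∀ p q : PowerSeries ℝ, gvCochain p q q = 0) ∧
    (∀ p q : PowerSeries ℝ, gvCochain p q p = 0) ∧
    -- the Chevalley–Eilenberg 3-cocycle identity
    (∀ g₁ g₂ g₃ g₄ : PowerSeries ℝ,
      - gvCochain (W1Bracket g₁ g₂) g₃ g₄
      + gvCochain (W1Bracket g₁ g₃) g₂ g₄
      - gvCochain (W1Bracket g₁ g₄) g₂ g₃
      - gvCochain (W1Bracket g₂ g₃) g₁ g₄
      + gvCochain (W1Bracket g₂ g₄) g₁ g₃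
      - gvCochain (W1Bracket g₃ g₄) g₁ g₂ = 0) := by
  refine ⟨fun p p' q r => ?_, fun p q q' r => ?_, fun p q r r' => ?_, fun c p q r => ?_,
    fun c p q r => ?_, fun c p q r => ?_, fun p q => ?_, fun p q => ?_, fun p q => ?_,
    gvCochain_cocycle⟩
  · simpa only [update_vec3_zero, gvCochain_eq_gvForm]
      using gvForm.map_update_add ![p, q, r] 0 p p'
  · simpa only [update_vec3_one, gvCochain_eq_gvForm]
      using gvForm.map_update_add ![p, q, r] 1 q q'
  · simpa only [update_vec3_two, gvCochain_eq_gvForm]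
      using gvForm.map_update_add ![p, q, r] 2 r r'
  · simpa only [update_vec3_zero, gvCochain_eq_gvForm, smul_eq_mul]
      using gvForm.map_update_smul ![p, q, r] 0 c p
  · simpa only [update_vec3_one, gvCochain_eq_gvForm, smul_eq_mul]
      using gvForm.map_update_smul ![p, q, r] 1 c q
  · simpa only [update_vec3_two, gvCochain_eq_gvForm, smul_eq_mul]
      using gvForm.map_update_smul ![p, q, r] 2 c r
  · rw [gvCochain_eq_gvForm]
    exact gvForm.map_eq_zero_of_eq _ (i := 0) (j := 1) rfl (by decide)
  · rw [gvCochain_eq_gvForm]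
    exact gvForm.map_eq_zero_of_eq _ (i := 1) (j := 2) rfl (by decide)
  · rw [gvCochain_eq_gvForm]
    exact gvForm.map_eq_zero_of_eq _ (i := 0) (j := 2) rfl (by decide)
end

section
/- Let A be an associative ℂ-algebra, n ≥ 0, and let (Ω, d, ∫, ρ) be an n-dimensional cycle over A; that is: Ω = ⊕_{j ≥ 0} Ω^j is a graded associative ℂ-algebra (Ω^i · Ω^j ⊆ Ω^{i+j}); d : Ω → Ω is a ℂ-linear map with d(Ω^j) ⊆ Ω^{j+1}, d ∘ d = 0, and d(ωω′) = (dω)ω′ + (−1)^i ω(dω′) for ω ∈ Ω^i; ∫ : Ω → ℂ is a ℂ-linear functional vanishing on Ω^j for j ≠ n, satisfying ∫ ω₂ω₁ = (−1)^{ij} ∫ ω₁ω₂ for all ω₁ ∈ Ω^i, ω₂ ∈ Ω^j, and ∫ dω = 0 for all ω ∈ Ω^{n−1}; and ρ : A → Ω^0 is an algebra homomorphism. Then the character τ(a⁰, a¹, …, aⁿ) := ∫ ρ(a⁰) d(ρ(a¹)) ⋯ d(ρ(aⁿ)) is a cyclic n-cocycle on A: τ(a¹,…,aⁿ,a⁰)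 = (−1)ⁿ τ(a⁰,…,aⁿ) for all arguments, and bτ = 0. -/
/-- The Hochschild coboundary `b` of an `n`-cochain `ψ`:
`(bψ)(a⁰,…,a^{n+1}) = Σ_{j=0}^{n} (−1)^j ψ(a⁰,…,aʲ·a^{j+1},…,a^{n+1})
  + (−1)^{n+1} ψ(a^{n+1}·a⁰, a¹,…,aⁿ)`. -/
noncomputable def hochschildCoboundary {A : Type*} [Mul A] (n : ℕ)
    (ψ : (Fin (n + 1) → A) → ℂ) : (Fin (n + 2) → A) → ℂ := fun a =>
  (∑ j : Fin (n + 1), (-1 : ℂ) ^ (j : ℕ) *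
      ψ (fun i => if (i : ℕ) < (j : ℕ) then a (Fin.castSucc i)
        else if (i : ℕ) = (j : ℕ) then a (Fin.castSucc i) * a i.succ
        else a i.succ)) +
  (-1 : ℂ) ^ (n + 1) *
    ψ (fun i => if (i : ℕ) = 0 then a (Fin.last (n + 1)) * a 0
      else a (Fin.castSucc i))

/-- The character `τ(a⁰, a¹, …, aⁿ) = ∫ ρ(a⁰) d(ρ(a¹)) ⋯ d(ρ(aⁿ))` of a cycle
`(Ω, d, ∫, ρ)` over an algebra `A`. -/
noncomputable def cycleCharacter {A : Type*} {Ω : Type*} [Ring A] [Ring Ω]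
    [Algebra ℂ A] [Algebra ℂ Ω] (n : ℕ) (d : Ω →ₗ[ℂ] Ω) (I : Ω →ₗ[ℂ] ℂ)
    (ρ : A →ₗ[ℂ] Ω) : (Fin (n + 1) → A) → ℂ := fun a =>
  I (ρ (a 0) * (List.ofFn fun i : Fin n => d (ρ (a i.succ))).prod)


section AuxCC

lemma aux_ofFn_eq {M : Type*} {k : ℕ} {g : Fin k → M} (f : ℕ → M)
    (h : ∀ i : Fin k, g i = f i) :
    List.ofFn g = (List.range k).map f := by
  apply List.ext_getElem (by simp)
  intro i h1 h2
  simp [h]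

lemma aux_range_map_split {M : Type*} (f : ℕ → M) (j k : ℕ) :
    (List.range (j + 1 + k)).map f =
      (List.range j).map f ++ f j :: (List.range k).map (fun i => f (j + 1 + i)) := by
  induction k with
  | zero => simp [List.range_succ]
  | succ k ih =>
    rw [show j + 1 + (k + 1) = (j + 1 + k) + 1 by omega, List.range_succ, List.map_append,
      ih, List.range_succ, List.map_append]
    simp

lemma aux_prod_mem {Ω : Type*} [Ring Ω] [Algebra ℂ Ω] (𝒜 : ℕ → Submodule ℂ Ω) [GradedRing 𝒜]
    (l : List Ω) (h : ∀ x ∈ l, x ∈ 𝒜 1) : l.prod ∈ 𝒜 l.length := by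
  induction l with
  | nil => simpa using SetLike.one_mem_graded 𝒜
  | cons x t ih =>
    have hx := h x (by simp)
    have ht := ih (fun y hy => h y (by simp [hy]))
    have := SetLike.mul_mem_graded hx ht
    rw [List.prod_cons, List.length_cons]
    convert this using 2
    omega

/-- The list `[d(ρ(a' s)), d(ρ(a' (s+1))), …, d(ρ(a' (s+k-1)))]`. -/
def Dlist {A : Type*} {Ω : Type*} [Ring A] [Ring Ω] [Algebra ℂ A] [Algebra ℂ Ω]
    (d : Ω →ₗ[ℂ] Ω) (ρ : A →ₗ[ℂ] Ω) (a' : ℕ → A) (s k : ℕ) : List Ω :=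
  (List.range k).map (fun i => d (ρ (a' (s + i))))

variable {A : Type*} [Ring A] [Algebra ℂ A] {Ω : Type*} [Ring Ω] [Algebra ℂ Ω]

lemma Dlist_zero (d : Ω →ₗ[ℂ] Ω) (ρ : A →ₗ[ℂ] Ω) (a' : ℕ → A) (s : ℕ) :
    Dlist d ρ a' s 0 = [] := by simp [Dlist]

lemma Dlist_cons (d : Ω →ₗ[ℂ] Ω) (ρ : A →ₗ[ℂ] Ω) (a' : ℕ → A) (s k : ℕ) :
    Dlist d ρ a' s (k + 1) = d (ρ (a' s)) :: Dlist d ρ a' (s + 1) k := by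
  unfold Dlist
  rw [show k + 1 = 0 + 1 + k by omega, aux_range_map_split]
  simp only [List.range_zero, List.map_nil, List.nil_append, add_zero]
  simp only [zero_add, ← add_assoc]

lemma Dlist_snoc (d : Ω →ₗ[ℂ] Ω) (ρ : A →ₗ[ℂ] Ω) (a' : ℕ → A) (s k : ℕ) :
    Dlist d ρ a' s (k + 1) = Dlist d ρ a' s k ++ [d (ρ (a' (s + k)))] := by
  unfold Dlist
  rw [show k + 1 = k + 1 + 0 by omega, aux_range_map_split]
  simp

lemma Dlist_prod_mem (𝒜 : ℕ → Submodule ℂ Ω) [GradedRing 𝒜]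
    (d : Ω →ₗ[ℂ] Ω) (hd_deg : ∀ j : ℕ, ∀ ω ∈ 𝒜 j, d ω ∈ 𝒜 (j + 1))
    (ρ : A →ₗ[ℂ] Ω) (hρ_deg : ∀ a : A, ρ a ∈ 𝒜 0)
    (a' : ℕ → A) (s k : ℕ) : (Dlist d ρ a' s k).prod ∈ 𝒜 k := by
  have := aux_prod_mem 𝒜 (Dlist d ρ a' s k) ?_
  · simpa [Dlist] using this
  · intro x hx
    simp only [Dlist, List.mem_map, List.mem_range] at hx
    obtain ⟨i, _, rfl⟩ := hx
    simpa using hd_deg 0 _ (hρ_deg _)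

lemma aux_d_one (𝒜 : ℕ → Submodule ℂ Ω) [GradedRing 𝒜] (d : Ω →ₗ[ℂ] Ω)
    (hd_leibniz : ∀ i : ℕ, ∀ ω ∈ 𝒜 i, ∀ ω' : Ω,
      d (ω * ω') = d ω * ω' + ((-1 : ℂ) ^ i) • (ω * d ω')) :
    d (1 : Ω) = 0 := by
  have h := hd_leibniz 0 1 (SetLike.one_mem_graded 𝒜) 1
  simp only [mul_one, one_mul, pow_zero, one_smul] at h
  exact left_eq_add.mp h

lemma Dlist_d_prod (𝒜 : ℕ → Submodule ℂ Ω) [GradedRing 𝒜]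
    (d : Ω →ₗ[ℂ] Ω) (hd_deg : ∀ j : ℕ, ∀ ω ∈ 𝒜 j, d ω ∈ 𝒜 (j + 1))
    (hd_sq : ∀ ω : Ω, d (d ω) = 0)
    (hd_leibniz : ∀ i : ℕ, ∀ ω ∈ 𝒜 i, ∀ ω' : Ω,
      d (ω * ω') = d ω * ω' + ((-1 : ℂ) ^ i) • (ω * d ω'))
    (ρ : A →ₗ[ℂ] Ω) (hρ_deg : ∀ a : A, ρ a ∈ 𝒜 0)
    (a' : ℕ → A) (s k : ℕ) : d (Dlist d ρ a' s k).prod = 0 := by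
  induction k generalizing s with
  | zero => simpa [Dlist] using aux_d_one 𝒜 d hd_leibniz
  | succ k ih =>
    rw [Dlist_cons, List.prod_cons,
      hd_leibniz 1 _ (by simpa using hd_deg 0 _ (hρ_deg _)) _, hd_sq, ih]
    simp

end AuxCC

section MasterCyc

variable {A : Type*} [Ring A] [Algebra ℂ A] {Ω : Type*} [Ring Ω] [Algebra ℂ Ω]

lemma cyclic_master (𝒜 : ℕ → Submodule ℂ Ω) [GradedRing 𝒜] (m : ℕ) (d : Ω →ₗ[ℂ] Ω)
    (hd_deg : ∀ j : ℕ, ∀ ω ∈ 𝒜 j, d ω ∈ 𝒜 (j + 1))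
    (hd_sq : ∀ ω : Ω, d (d ω) = 0)
    (hd_leibniz : ∀ i : ℕ, ∀ ω ∈ 𝒜 i, ∀ ω' : Ω,
      d (ω * ω') = d ω * ω' + ((-1 : ℂ) ^ i) • (ω * d ω'))
    (I : Ω →ₗ[ℂ] ℂ)
    (hI_trace : ∀ i j : ℕ, ∀ ω₁ ∈ 𝒜 i, ∀ ω₂ ∈ 𝒜 j,
      I (ω₂ * ω₁) = (-1 : ℂ) ^ (i * j) * I (ω₁ * ω₂))
    (hI_closed : ∀ j : ℕ, j + 1 = m + 1 → ∀ ω ∈ 𝒜 j, I (d ω) = 0)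
    (ρ : A →ₗ[ℂ] Ω)
    (hρ_mul : ∀ a b : A, ρ (a * b) = ρ a * ρ b)
    (hρ_deg : ∀ a : A, ρ a ∈ 𝒜 0)
    (a' : ℕ → A) :
    I ((ρ (a' 1) * (Dlist d ρ a' 2 m).prod) * d (ρ (a' 0)))
      = (-1 : ℂ) ^ (m + 1) * I (ρ (a' 0) * (Dlist d ρ a' 1 (m + 1)).prod) := by
  have hδ : ∀ x : A, d (ρ x) ∈ 𝒜 1 := fun x => by simpa using hd_deg 0 _ (hρ_deg x)
  have hL0 : ∀ (x : A) (ω : Ω), d (ρ x * ω) = d (ρ x) * ω + ρ x * d ω := by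
    intro x ω
    simpa using hd_leibniz 0 _ (hρ_deg x) ω
  have hX : ρ (a' 1) * (Dlist d ρ a' 2 m).prod ∈ 𝒜 m := by
    simpa using SetLike.mul_mem_graded (hρ_deg (a' 1))
      (Dlist_prod_mem 𝒜 d hd_deg ρ hρ_deg a' 2 m)
  rw [hI_trace 1 m (d (ρ (a' 0))) (hδ _) _ hX]
  have step1 : d (ρ (a' 0)) * (ρ (a' 1) * (Dlist d ρ a' 2 m).prod)
      = d (ρ (a' 0 * a' 1) * (Dlist d ρ a' 2 m).prod)
        - ρ (a' 0) * (Dlist d ρ a' 1 (m + 1)).prod := by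
    have h1 : d (ρ (a' 0 * a' 1) * (Dlist d ρ a' 2 m).prod)
        = d (ρ (a' 0 * a' 1)) * (Dlist d ρ a' 2 m).prod := by
      rw [hL0, Dlist_d_prod 𝒜 d hd_deg hd_sq hd_leibniz ρ hρ_deg]
      simp
    have h2 : d (ρ (a' 0 * a' 1)) = d (ρ (a' 0)) * ρ (a' 1) + ρ (a' 0) * d (ρ (a' 1)) := by
      rw [hρ_mul, hL0]
    rw [h1, h2, Dlist_cons, List.prod_cons]
    noncomm_ring
  have step2 : I (d (ρ (a' 0 * a' 1) * (Dlist d ρ a' 2 m).prod)) = 0 := by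
    apply hI_closed m rfl
    simpa using SetLike.mul_mem_graded (hρ_deg (a' 0 * a' 1))
      (Dlist_prod_mem 𝒜 d hd_deg ρ hρ_deg a' 2 m)
  rw [step1, map_sub, step2, zero_sub]
  rw [one_mul]
  rw [pow_succ]
  ring

end MasterCyc

section MasterB

variable {A : Type*} [Ring A] [Algebra ℂ A] {Ω : Type*} [Ring Ω] [Algebra ℂ Ω]

lemma b_master (𝒜 : ℕ → Submodule ℂ Ω) [GradedRing 𝒜] (n : ℕ) (d : Ω →ₗ[ℂ] Ω)
    (hd_deg : ∀ j : ℕ, ∀ ω ∈ 𝒜 j, d ω ∈ 𝒜 (j + 1))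
    (hd_leibniz : ∀ i : ℕ, ∀ ω ∈ 𝒜 i, ∀ ω' : Ω,
      d (ω * ω') = d ω * ω' + ((-1 : ℂ) ^ i) • (ω * d ω'))
    (I : Ω →ₗ[ℂ] ℂ)
    (hI_trace : ∀ i j : ℕ, ∀ ω₁ ∈ 𝒜 i, ∀ ω₂ ∈ 𝒜 j,
      I (ω₂ * ω₁) = (-1 : ℂ) ^ (i * j) * I (ω₁ * ω₂))
    (ρ : A →ₗ[ℂ] Ω)
    (hρ_mul : ∀ a b : A, ρ (a * b) = ρ a * ρ b)
    (hρ_deg : ∀ a : A, ρ a ∈ 𝒜 0)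
    (a' : ℕ → A) (T : ℕ → ℂ)
    (hT0 : T 0 = I (ρ (a' 0 * a' 1) * (Dlist d ρ a' 2 n).prod))
    (hTs : ∀ j : ℕ, j < n → T (j + 1) =
      I (ρ (a' 0) * ((Dlist d ρ a' 1 j).prod *
        (d (ρ (a' (j + 1) * a' (j + 2))) * (Dlist d ρ a' (j + 3) (n - 1 - j)).prod)))) :
    (∑ j ∈ Finset.range (n + 1), (-1 : ℂ) ^ j * T j) +
      (-1 : ℂ) ^ (n + 1) * I (ρ (a' (n + 1) * a' 0) * (Dlist d ρ a' 1 n).prod) = 0 := by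
  have hL0 : ∀ (x : A) (ω : Ω), d (ρ x * ω) = d (ρ x) * ω + ρ x * d ω := by
    intro x ω
    simpa using hd_leibniz 0 _ (hρ_deg x) ω
  set S : ℕ → ℂ := fun j => I (ρ (a' 0) * ((Dlist d ρ a' 1 j).prod *
    (ρ (a' (j + 1)) * (Dlist d ρ a' (j + 2) (n - j)).prod))) with hSdef
  set u : ℕ → ℂ := fun j => (-1 : ℂ) ^ j * S j with hudef
  -- T 0 = S 0
  have hT0' : T 0 = S 0 := by
    rw [hT0, hSdef]
    simp only [Dlist_zero, List.prod_nil, one_mul, Nat.sub_zero, hρ_mul, mul_assoc]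
  -- T (j+1) = S (j+1) + S j
  have hTs' : ∀ j : ℕ, j < n → T (j + 1) = S (j + 1) + S j := by
    intro j hj
    have hsplit : d (ρ (a' (j + 1) * a' (j + 2)))
        = d (ρ (a' (j + 1))) * ρ (a' (j + 2)) + ρ (a' (j + 1)) * d (ρ (a' (j + 2))) := by
      rw [hρ_mul, hL0]
    have hS1 : S (j + 1) = I (ρ (a' 0) * ((Dlist d ρ a' 1 j).prod *
        ((d (ρ (a' (j + 1))) * ρ (a' (j + 2))) * (Dlist d ρ a' (j + 3) (n - 1 - j)).prod))) := by
      rw [hSdef]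
      simp only
      rw [Dlist_snoc d ρ a' 1 j, List.prod_append, List.prod_singleton,
        show (1 : ℕ) + j = j + 1 by omega, show n - (j + 1) = n - 1 - j by omega,
        show j + 1 + 2 = j + 3 by omega]
      ring_nf
      congr 1
      noncomm_ring
    have hS2 : S j = I (ρ (a' 0) * ((Dlist d ρ a' 1 j).prod *
        ((ρ (a' (j + 1)) * d (ρ (a' (j + 2)))) * (Dlist d ρ a' (j + 3) (n - 1 - j)).prod))) := by
      rw [hSdef]
      simp only
      rw [show n - j = (n - 1 - j) + 1 by omega, Dlist_cons d ρ a' (j + 2),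
        List.prod_cons, show j + 2 + 1 = j + 3 by omega]
      congr 1
      noncomm_ring
    rw [hTs j hj, hsplit, hS1, hS2]
    rw [← map_add]
    congr 1
    noncomm_ring
  -- last term
  have hlast : I (ρ (a' (n + 1) * a' 0) * (Dlist d ρ a' 1 n).prod) = S n := by
    have hω : ρ (a' 0) * (Dlist d ρ a' 1 n).prod ∈ 𝒜 n := by
      simpa using SetLike.mul_mem_graded (hρ_deg (a' 0))
        (Dlist_prod_mem 𝒜 d hd_deg ρ hρ_deg a' 1 n)
    rw [hρ_mul, mul_assoc, hI_trace n 0 _ hω _ (hρ_deg (a' (n + 1)))]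
    rw [hSdef]
    simp only [Nat.sub_self, Dlist_zero, List.prod_nil, mul_one, Nat.mul_zero, pow_zero, one_mul]
    rw [mul_assoc]
  -- telescope
  have htel : (∑ j ∈ Finset.range (n + 1), (-1 : ℂ) ^ j * T j) = u n := by
    rw [Finset.sum_range_succ']
    have : ∀ j ∈ Finset.range n, (-1 : ℂ) ^ (j + 1) * T (j + 1) = u (j + 1) - u j := by
      intro j hj
      rw [hTs' j (Finset.mem_range.mp hj), hudef]
      simp only [pow_succ]
      ring
    rw [Finset.sum_congr rfl this, Finset.sum_range_sub u n]
    rw [pow_zero, one_mul, hT0', hudef]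
    simp
  rw [htel, hlast, hudef]
  simp only [pow_succ]
  ring

end MasterB

/-- Let `A` be an associative `ℂ`-algebra and `(Ω, d, ∫, ρ)` an
`n`-dimensional cycle over `A`: `Ω = ⊕ Ω^j` a graded algebra, `d` a degree-one
graded differentiation with `d² = 0`, `∫` a closed graded trace vanishing in degrees
`≠ n`, and `ρ : A → Ω⁰` an algebra homomorphism. Then the character
`τ(a⁰,…,aⁿ) = ∫ ρ(a⁰) d(ρ(a¹)) ⋯ d(ρ(aⁿ))` is a cyclic `n`-cocycle on `A`:
`τ(a¹,…,aⁿ,a⁰) = (−1)ⁿ τ(a⁰,…,aⁿ)` and `bτ = 0`. -/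
theorem cycle_character_is_cyclic_cocycle {A : Type*} [Ring A] [Algebra ℂ A]
    {Ω : Type*} [Ring Ω] [Algebra ℂ Ω] (𝒜 : ℕ → Submodule ℂ Ω) [GradedRing 𝒜]
    (n : ℕ) (d : Ω →ₗ[ℂ] Ω)
    (hd_deg : ∀ j : ℕ, ∀ ω ∈ 𝒜 j, d ω ∈ 𝒜 (j + 1))
    (hd_sq : ∀ ω : Ω, d (d ω) = 0)
    (hd_leibniz : ∀ i : ℕ, ∀ ω ∈ 𝒜 i, ∀ ω' : Ω,
      d (ω * ω') = d ω * ω' + ((-1 : ℂ) ^ i) • (ω * d ω'))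
    (I : Ω →ₗ[ℂ] ℂ)
    (hI_vanish : ∀ j : ℕ, j ≠ n → ∀ ω ∈ 𝒜 j, I ω = 0)
    (hI_trace : ∀ i j : ℕ, ∀ ω₁ ∈ 𝒜 i, ∀ ω₂ ∈ 𝒜 j,
      I (ω₂ * ω₁) = (-1 : ℂ) ^ (i * j) * I (ω₁ * ω₂))
    (hI_closed : ∀ j : ℕ, j + 1 = n → ∀ ω ∈ 𝒜 j, I (d ω) = 0)
    (ρ : A →ₗ[ℂ] Ω)
    (hρ_mul : ∀ a b : A, ρ (a * b) = ρ a * ρ b)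
    (hρ_deg : ∀ a : A, ρ a ∈ 𝒜 0) :
    (∀ a : Fin (n + 1) → A,
        cycleCharacter n d I ρ (fun i => a (i + 1))
          = (-1 : ℂ) ^ n * cycleCharacter n d I ρ a) ∧
    hochschildCoboundary n (cycleCharacter n d I ρ) = 0 := by
  constructor
  · -- cyclicity
    rcases n with _ | m
    · intro a
      have h : (fun i : Fin 1 => a (i + 1)) = a := by
        funext i
        congr 1
        apply Fin.ext
        have hx := (i + 1).isLt
        have hy := i.isLt
        omega
      rw [h]
      norm_num
    · intro a
      set a' : ℕ → A := fun i => a ⟨i % (m + 2), Nat.mod_lt _ (by omega)⟩ with ha'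
      have ha'eq : ∀ (k : ℕ), k < m + 2 → ∀ x : Fin (m + 2), (x : ℕ) = k → a x = a' k := by
        intro k hk x hx
        rw [ha']
        congr 1
        apply Fin.ext
        simp [Nat.mod_eq_of_lt hk, hx]
      have key := cyclic_master 𝒜 m d hd_deg hd_sq hd_leibniz I hI_trace hI_closed ρ
        hρ_mul hρ_deg a'
      simp only [cycleCharacter]
      have hofL : (List.ofFn fun i : Fin (m + 1) => d (ρ (a (i.succ + 1))))
          = Dlist d ρ a' 2 (m + 1) := by
        unfold Dlist
        apply aux_ofFn_eq
        intro i
        congr 2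
        rw [ha']
        show a (i.succ + 1) = a ⟨(2 + (i : ℕ)) % (m + 2), _⟩
        congr 1
        apply Fin.ext
        simp only [Fin.add_def, Fin.val_succ, Fin.val_one]
        congr 1
        omega
      have hofR : (List.ofFn fun i : Fin (m + 1) => d (ρ (a i.succ)))
          = Dlist d ρ a' 1 (m + 1) := by
        unfold Dlist
        apply aux_ofFn_eq
        intro i
        congr 2
        have hi := i.isLt
        apply ha'eq
        · omega
        · simp only [Fin.val_succ]
          omega
      have h01 : a (0 + 1) = a' 1 := by
        apply ha'eq 1 (by omega)
        simp [Fin.add_def]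
      have h00 : a 0 = a' 0 := by
        apply ha'eq 0 (by omega)
        simp
      rw [hofL, hofR, h01, h00]
      rw [Dlist_snoc d ρ a' 2 m]
      have h20 : a' (2 + m) = a' 0 := by
        simp only [ha']
        congr 1
        apply Fin.ext
        show (2 + m) % (m + 2) = 0 % (m + 2)
        rw [add_comm]
        simp
      rw [h20, List.prod_append, List.prod_singleton, ← mul_assoc]
      exact key
  · -- Hochschild cocycle
    funext a
    set a' : ℕ → A := fun i => a ⟨i % (n + 2), Nat.mod_lt _ (by omega)⟩ with ha'
    have ha'eq : ∀ (k : ℕ), k < n + 2 → ∀ x : Fin (n + 2), (x : ℕ) = k → a x = a' k := by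
      intro k hk x hx
      rw [ha']
      congr 1
      apply Fin.ext
      simp [Nat.mod_eq_of_lt hk, hx]
    have hT0 : cycleCharacter n d I ρ
        (fun i => if (i : ℕ) < 0 then a (Fin.castSucc i)
          else if (i : ℕ) = 0 then a (Fin.castSucc i) * a i.succ
          else a i.succ) = I (ρ (a' 0 * a' 1) * (Dlist d ρ a' 2 n).prod) := by
      simp only [cycleCharacter]
      have hhead : (if ((0 : Fin (n + 1)) : ℕ) < 0 then a (Fin.castSucc 0)
          else if ((0 : Fin (n + 1)) : ℕ) = 0 then a (Fin.castSucc 0) * a (Fin.succ 0)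
          else a (Fin.succ 0)) = a' 0 * a' 1 := by
        rw [if_neg (by omega), if_pos (by simp : ((0 : Fin (n + 1)) : ℕ) = 0)]
        rw [ha'eq 0 (by omega) _ (by simp), ha'eq 1 (by omega) _ (by simp)]
      have hlist : (List.ofFn fun i : Fin n =>
          d (ρ (if ((i.succ : Fin (n + 1)) : ℕ) < 0 then a (Fin.castSucc i.succ)
            else if ((i.succ : Fin (n + 1)) : ℕ) = 0 then a (Fin.castSucc i.succ) * a i.succ.succ
            else a i.succ.succ))) = Dlist d ρ a' 2 n := by
        unfold Dlist
        apply aux_ofFn_eq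
        intro i
        rw [if_neg (by simp), if_neg (by simp)]
        congr 2
        apply ha'eq
        · omega
        · simp only [Fin.val_succ]
          omega
      rw [hhead, hlist]
    have hTs : ∀ j : ℕ, j < n → cycleCharacter n d I ρ
        (fun i => if (i : ℕ) < j + 1 then a (Fin.castSucc i)
          else if (i : ℕ) = j + 1 then a (Fin.castSucc i) * a i.succ
          else a i.succ) =
        I (ρ (a' 0) * ((Dlist d ρ a' 1 j).prod *
          (d (ρ (a' (j + 1) * a' (j + 2))) * (Dlist d ρ a' (j + 3) (n - 1 - j)).prod))) := by
      intro j hj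
      simp only [cycleCharacter]
      have hhead : (if ((0 : Fin (n + 1)) : ℕ) < j + 1 then a (Fin.castSucc 0)
          else if ((0 : Fin (n + 1)) : ℕ) = j + 1 then a (Fin.castSucc 0) * a (Fin.succ 0)
          else a (Fin.succ 0)) = a' 0 := by
        rw [if_pos (by simp)]
        exact ha'eq 0 (by omega) _ (by simp)
      have hpt : ∀ i : Fin n,
          d (ρ (if ((i.succ : Fin (n + 1)) : ℕ) < j + 1 then a (Fin.castSucc i.succ)
            else if ((i.succ : Fin (n + 1)) : ℕ) = j + 1 then a (Fin.castSucc i.succ) * a i.succ.succ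
            else a i.succ.succ))
          = (fun i : ℕ => if i < j then d (ρ (a' (1 + i)))
            else if i = j then d (ρ (a' (j + 1) * a' (j + 2)))
            else d (ρ (a' (i + 2)))) (i : ℕ) := by
        intro i
        have hi := i.isLt
        simp only [Fin.val_succ]
        rcases lt_trichotomy ((i : ℕ)) j with h | h | h
        · rw [if_pos (by omega), if_pos h]
          congr 2
          exact ha'eq _ (by omega) _
            (by simp only [Fin.coe_castSucc, Fin.val_succ]; try omega)
        · rw [if_neg (by omega), if_pos (by omega), if_neg (by omega), if_pos h]
          congr 2
          rw [ha'eq (j + 1) (by omega) _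
              (by simp only [Fin.coe_castSucc, Fin.val_succ]; try omega),
            ha'eq (j + 2) (by omega) _
              (by simp only [Fin.val_succ]; try omega)]
        · rw [if_neg (by omega), if_neg (by omega), if_neg (by omega), if_neg (by omega)]
          congr 2
          exact ha'eq _ (by omega) _ (by simp only [Fin.val_succ]; try omega)
      have hlist : (List.ofFn fun i : Fin n =>
          d (ρ (if ((i.succ : Fin (n + 1)) : ℕ) < j + 1 then a (Fin.castSucc i.succ)
            else if ((i.succ : Fin (n + 1)) : ℕ) = j + 1 then a (Fin.castSucc i.succ) * a i.succ.succ
            else a i.succ.succ)))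
          = Dlist d ρ a' 1 j ++ d (ρ (a' (j + 1) * a' (j + 2)))
              :: Dlist d ρ a' (j + 3) (n - 1 - j) := by
        rw [aux_ofFn_eq (fun i : ℕ => if i < j then d (ρ (a' (1 + i)))
            else if i = j then d (ρ (a' (j + 1) * a' (j + 2)))
            else d (ρ (a' (i + 2)))) hpt]
        have hsplit := aux_range_map_split
          (fun i : ℕ => if i < j then d (ρ (a' (1 + i)))
            else if i = j then d (ρ (a' (j + 1) * a' (j + 2)))
            else d (ρ (a' (i + 2)))) j (n - 1 - j)
        rw [show j + 1 + (n - 1 - j) = n by omega] at hsplit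
        rw [hsplit]
        congr 1
        · unfold Dlist
          apply List.map_congr_left
          intro i hi
          rw [if_pos (List.mem_range.mp hi)]
        · congr 1
          · rw [if_neg (by omega), if_pos rfl]
          · unfold Dlist
            apply List.map_congr_left
            intro i _
            rw [if_neg (by omega), if_neg (by omega),
              show j + 1 + i + 2 = j + 3 + i by omega]
      rw [hhead, hlist, List.prod_append, List.prod_cons]
    have hlastterm : cycleCharacter n d I ρ
        (fun i => if (i : ℕ) = 0 then a (Fin.last (n + 1)) * a 0 else a (Fin.castSucc i))
        = I (ρ (a' (n + 1) * a' 0) * (Dlist d ρ a' 1 n).prod) := by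
      simp only [cycleCharacter]
      have hhead : (if ((0 : Fin (n + 1)) : ℕ) = 0 then a (Fin.last (n + 1)) * a 0
          else a (Fin.castSucc 0)) = a' (n + 1) * a' 0 := by
        rw [if_pos (by simp : ((0 : Fin (n + 1)) : ℕ) = 0)]
        rw [ha'eq (n + 1) (by omega) _ (by simp), ha'eq 0 (by omega) _ (by simp)]
      have hlist : (List.ofFn fun i : Fin n =>
          d (ρ (if ((i.succ : Fin (n + 1)) : ℕ) = 0 then a (Fin.last (n + 1)) * a 0
            else a (Fin.castSucc i.succ)))) = Dlist d ρ a' 1 n := by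
        unfold Dlist
        apply aux_ofFn_eq
        intro i
        rw [if_neg (by simp)]
        congr 2
        apply ha'eq
        · omega
        · simp only [Fin.coe_castSucc, Fin.val_succ]
          omega
      rw [hhead, hlist]
    simp only [hochschildCoboundary, Pi.zero_apply]
    rw [show (∑ j : Fin (n + 1), (-1 : ℂ) ^ (j : ℕ) * cycleCharacter n d I ρ
        (fun i => if (i : ℕ) < (j : ℕ) then a (Fin.castSucc i)
          else if (i : ℕ) = (j : ℕ) then a (Fin.castSucc i) * a i.succ
          else a i.succ))
        = ∑ jn ∈ Finset.range (n + 1), ((-1 : ℂ) ^ jn * cycleCharacter n d I ρ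
          (fun i => if (i : ℕ) < jn then a (Fin.castSucc i)
            else if (i : ℕ) = jn then a (Fin.castSucc i) * a i.succ
            else a i.succ))
      from Fin.sum_univ_eq_sum_range (fun jn => (-1 : ℂ) ^ jn * cycleCharacter n d I ρ
        (fun i => if (i : ℕ) < jn then a (Fin.castSucc i)
          else if (i : ℕ) = jn then a (Fin.castSucc i) * a i.succ
          else a i.succ)) (n + 1)]
    rw [hlastterm]
    exact b_master 𝒜 n d hd_deg hd_leibniz I hI_trace ρ hρ_mul hρ_deg a'
      (fun jn => cycleCharacter n d I ρ
        (fun i => if (i : ℕ) < jn then a (Fin.castSucc i)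
          else if (i : ℕ) = jn then a (Fin.castSucc i) * a i.succ
          else a i.succ)) hT0 hTs
end

section
/- Let A be an associative ℂ-algebra, D : A → A a ℂ-linear derivation (D(ab) = D(a)b + aD(b)), and φ : A × A → ℂ a bilinear functional such that: (i) φ(a, b) = −φ(b, a) for all a, b ∈ A (cyclicity of a 1-cochain); (ii) φ(ab, c) − φ(a, bc) + φ(ca, b) = 0 for all a, b, c ∈ A (bφ = 0, so φ is a cyclic 1-cocycle); (iii) φ(D(a), b) + φ(a, D(b)) = 0 for all a, b ∈ A (φ is D-invariant). Then the contraction χ = i_Dφ defined by χ(a⁰, a¹, a²) = φ(D(a²)·a⁰, a¹) − φ(a⁰·D(a¹), a²) is a cyclic 2-cocycle on A: χ(a¹, a², a⁰) = χ(a⁰, a¹, a²) for all arguments, and bχ = 0. -/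
/-- The contraction `χ = i_Dφ` of a bilinear functional `φ` by a derivation `D`:
`χ(a⁰, a¹, a²) = φ(D(a²)·a⁰, a¹) − φ(a⁰·D(a¹), a²)`. -/
noncomputable def contractionCochain {A : Type*} [Ring A] [Algebra ℂ A]
    (D : A →ₗ[ℂ] A) (φ : A →ₗ[ℂ] A →ₗ[ℂ] ℂ) (a₀ a₁ a₂ : A) : ℂ :=
  φ (D a₂ * a₀) a₁ - φ (a₀ * D a₁) a₂

/-- Let `A` be an associative `ℂ`-algebra, `D` a derivation of `A`
and `φ` a bilinear functional on `A` which is a cyclic 1-cocycle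
(`φ(a,b) = −φ(b,a)` and `φ(ab,c) − φ(a,bc) + φ(ca,b) = 0`) invariant under `D`
(`φ(D(a),b) + φ(a,D(b)) = 0`). Then the contraction `χ = i_Dφ`, defined by
`χ(a⁰,a¹,a²) = φ(D(a²)a⁰, a¹) − φ(a⁰D(a¹), a²)`, is a cyclic 2-cocycle on `A`:
`χ(a¹,a²,a⁰) = χ(a⁰,a¹,a²)` and `bχ = 0`. -/
theorem contraction_is_cyclic_two_cocycle {A : Type*} [Ring A] [Algebra ℂ A]
    (D : A →ₗ[ℂ] A) (hD : ∀ a b : A, D (a * b) = D a * b + a * D b)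
    (φ : A →ₗ[ℂ] A →ₗ[ℂ] ℂ)
    (hanti : ∀ a b : A, φ a b = -φ b a)
    (hcoc : ∀ a b c : A, φ (a * b) c - φ a (b * c) + φ (c * a) b = 0)
    (hinv : ∀ a b : A, φ (D a) b + φ a (D b) = 0) :
    (∀ a₀ a₁ a₂ : A,
        contractionCochain D φ a₁ a₂ a₀ = contractionCochain D φ a₀ a₁ a₂) ∧
    (∀ a₀ a₁ a₂ a₃ : A,
        contractionCochain D φ (a₀ * a₁) a₂ a₃
          - contractionCochain D φ a₀ (a₁ * a₂) a₃
          + contractionCochain D φ a₀ a₁ (a₂ * a₃)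
          - contractionCochain D φ (a₃ * a₀) a₁ a₂ = 0) := by
  constructor
  · intro a₀ a₁ a₂
    have i1 := hinv a₀ (a₁ * a₂)
    have i2 := hinv a₁ (a₂ * a₀)
    rw [hD, map_add] at i1 i2
    simp only [contractionCochain]
    linear_combination (-1 : ℂ) * hanti a₀ (a₁ * D a₂) - hanti a₁ (D a₂ * a₀)
      - hanti (D a₀) (a₁ * a₂) - hanti (D a₁) (a₂ * a₀)
      + hcoc a₀ (D a₁) a₂ + hcoc a₁ a₂ (D a₀) + i1 + i2
  · intro a₀ a₁ a₂ a₃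
    have h1 := hanti a₁ (a₂ * (D a₃ * a₀))
    have h2 := hanti a₂ (a₃ * (a₀ * D a₁))
    have h3 := hanti (a₀ * D a₁) (a₂ * a₃)
    have h4 := hanti (a₁ * a₂) (D a₃ * a₀)
    have h5 := hcoc a₁ a₂ (D a₃ * a₀)
    have h6 := hcoc a₂ a₃ (a₀ * D a₁)
    simp only [contractionCochain, hD, mul_add, add_mul, map_add,
      LinearMap.add_apply, mul_assoc] at h1 h2 h3 h4 h5 h6 ⊢
    linear_combination h1 + h2 - h3 - h4 + h5 + h6
end
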